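/- Let G be a connected undirected graph with Laplacian L having algebraic connectivity λ_2. Along solutions of dS_i/dt = Σ_{j∈N_i}(S_j - S_i)/‖S_j - S_i‖_F^α with α ∈ (0,1), define δ_i = S_i - S_c where S_c is the (constant) average, and V = (1/2) Σ_i ‖δ_i‖_F². Then dV/dt ≤ -κ V^{(2-α)/2} with κ = (2λ_2)^{(2-α)/2}, and hence V(t) = 0 for all t ≥ T_c with T_c ≤ 2 V(0)^{α/2}/(κ α); i.e., all S_i converge to the initial average Ave{S_i(0)} in finite time. -/

import Mathlib

open Matrix
open scoped Classical

/-- Frobenius norm of a real matrix. -/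
noncomputable def frobNorm {m : Type*} [Fintype m] {l : Type*} [Fintype l]
    (M : Matrix m l ℝ) : ℝ :=
  Real.sqrt (Matrix.trace (Mᵀ * M))

/-!
Along the flow the sum `∑ i, S i` is conserved, because the interaction of `i` with `j` is the
negative of that of `j` with `i`; so the deviations `δ i = S i - S_c` have mean zero at all
times, and each matrix entry of `δ` is orthogonal to the kernel of the Laplacian (the constants,
`G` being connected). Pairing the flow with `δ` and symmetrising over edges gives
`dV/dt = -∑_{edges} ‖S j - S i‖^(2 - α)`. Subadditivity of `x ↦ x ^ p`, `p = (2 - α) / 2`, over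
the edges and the spectral bound `λ₂ ‖δ‖² ≤ δᵀ L δ`, applied entrywise, give
`dV/dt ≤ -(2 λ₂ V) ^ p`. Finally `V ^ (α / 2) + κ (α / 2) t` is nonincreasing while `V > 0`,
which forces `V` to vanish by time `2 V(0) ^ (α / 2) / (κ α)`.
-/

open Finset

section Frobenius

variable {m l : Type*} [Fintype m] [Fintype l]

lemma Matrix.trace_transpose_mul_self (M : Matrix m l ℝ) :
    trace (Mᵀ * M) = ∑ a, ∑ b, M a b ^ 2 := by
  simp only [trace, Matrix.diag, mul_apply, transpose_apply, sq]
  exact sum_comm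

lemma frobNorm_sq (M : Matrix m l ℝ) : frobNorm M ^ 2 = ∑ a, ∑ b, M a b ^ 2 := by
  rw [frobNorm, Real.sq_sqrt (by rw [trace_transpose_mul_self]; positivity),
    trace_transpose_mul_self]

lemma frobNorm_nonneg (M : Matrix m l ℝ) : 0 ≤ frobNorm M := Real.sqrt_nonneg _

lemma frobNorm_sub_comm (A B : Matrix m l ℝ) : frobNorm (A - B) = frobNorm (B - A) := by
  rw [frobNorm, ← neg_sub, transpose_neg, Matrix.neg_mul, Matrix.mul_neg, neg_neg, ← frobNorm]

lemma frobNorm_eq_zero {M : Matrix m l ℝ} : frobNorm M = 0 ↔ M = 0 := by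
  rw [← pow_eq_zero_iff two_ne_zero, frobNorm_sq,
    sum_eq_zero_iff_of_nonneg fun _ _ => by positivity]
  simp only [mem_univ, forall_const, sum_eq_zero_iff_of_nonneg fun _ _ => sq_nonneg _,
    sq_eq_zero_iff, ← Matrix.ext_iff, Matrix.zero_apply]

end Frobenius

lemma Real.rpow_sum_le_sum_rpow {ι : Type*} (s : Finset ι) {f : ι → ℝ} (hf : ∀ i ∈ s, 0 ≤ f i)
    {p : ℝ} (hp0 : 0 < p) (hp1 : p ≤ 1) :
    (∑ i ∈ s, f i) ^ p ≤ ∑ i ∈ s, f i ^ p := by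
  induction s using Finset.cons_induction with
  | empty => simp [Real.zero_rpow hp0.ne']
  | cons a s ha ih =>
    simp only [forall_mem_cons] at hf
    rw [sum_cons, sum_cons]
    exact (Real.rpow_add_le_add_rpow hf.1 (sum_nonneg hf.2) hp0.le hp1).trans
      (add_le_add_right (ih hf.2) _)

lemma Real.inv_rpow_mul_sq {r : ℝ} (hr : 0 ≤ r) {α : ℝ} (hα : α ≠ 2) :
    (r ^ α)⁻¹ * r ^ 2 = r ^ (2 - α) := by
  rw [Real.rpow_sub' hr (sub_ne_zero.2 hα.symm), Real.rpow_two, inv_mul_eq_div]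

lemma Finset.sum_sum_sum_sum_comm {α β γ M : Type*} [AddCommMonoid M] {s : Finset α}
    {t : Finset β} {u : Finset γ} {v : γ → Finset γ} {f : α → β → γ → γ → M} :
    ∑ a ∈ s, ∑ b ∈ t, ∑ i ∈ u, ∑ j ∈ v i, f a b i j =
      ∑ i ∈ u, ∑ j ∈ v i, ∑ a ∈ s, ∑ b ∈ t, f a b i j :=
  sum_comm_cycle.trans (sum_congr rfl fun _ _ => sum_comm_cycle)

lemma Finset.sum_sub_inv_card_smul_sum {ι E : Type*} [Fintype ι] [AddCommGroup E] [Module ℝ E]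
    (Y : ι → E) : ∑ i, (Y i - (Fintype.card ι : ℝ)⁻¹ • ∑ j, Y j) = 0 := by
  rcases isEmpty_or_nonempty ι with hι | hι
  · simp
  · rw [sum_sub_distrib, sum_const, card_univ, ← Nat.cast_smul_eq_nsmul ℝ, smul_smul,
      mul_inv_cancel₀ (by positivity), one_smul, sub_self]

lemma Matrix.IsHermitian.mul_dotProduct_self_le {n : Type*} [Fintype n] [DecidableEq n]
    {A : Matrix n n ℝ} (hA : A.IsHermitian) {lam : ℝ}
    (hspec : ∀ μ ∈ spectrum ℝ A, μ = 0 ∨ lam ≤ μ) {v : n → ℝ}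
    (hv : ∀ w, A *ᵥ w = 0 → w ⬝ᵥ v = 0) :
    lam * (v ⬝ᵥ v) ≤ v ⬝ᵥ (A *ᵥ v) := by
  set u : n → n → ℝ := fun k => ⇑(hA.eigenvectorBasis k)
  have parseval : ∀ x y : n → ℝ, ∑ k, (u k ⬝ᵥ x) * (u k ⬝ᵥ y) = x ⬝ᵥ y := fun x y => by
    simpa [u, EuclideanSpace.inner_eq_star_dotProduct, dotProduct_comm] using
      hA.eigenvectorBasis.sum_inner_mul_inner (WithLp.toLp 2 x) (WithLp.toLp 2 y)
  have heig : ∀ k, u k ⬝ᵥ (A *ᵥ v) = hA.eigenvalues k * (u k ⬝ᵥ v) := fun k => by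
    have hsymm : u k ᵥ* A = A *ᵥ u k := by
      conv_lhs => rw [← show Aᵀ = A by simpa using hA.eq]
      exact vecMul_transpose A (u k)
    rw [dotProduct_mulVec, hsymm, hA.mulVec_eigenvectorBasis, smul_dotProduct, smul_eq_mul]
  rw [← parseval v v, ← parseval v (A *ᵥ v), mul_sum]
  refine sum_le_sum fun k _ => ?_
  rw [heig]
  rcases hspec _ (hA.eigenvalues_mem_spectrum_real k) with h0 | hlam
  · have : u k ⬝ᵥ v = 0 := hv _ (by rw [hA.mulVec_eigenvectorBasis, h0, zero_smul])
    simp [this]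
  · nlinarith [mul_self_nonneg (u k ⬝ᵥ v)]

namespace SimpleGraph

section Sums

variable {V : Type*} [Fintype V] (G : SimpleGraph V) [DecidableRel G.Adj]

lemma sum_sum_adj_comm {M : Type*} [AddCommMonoid M] (h : V → V → M) :
    ∑ i, ∑ j ∈ univ with G.Adj i j, h i j = ∑ i, ∑ j ∈ univ with G.Adj i j, h j i :=
  sum_comm' fun i j => by simp [G.adj_comm]

lemma two_mul_sum_mul_sum_adj_of_antisymm (f : V → ℝ) {g : V → V → ℝ}
    (hg : ∀ i j, g j i = -g i j) :
    2 * ∑ i, f i * ∑ j ∈ univ with G.Adj i j, g i j =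
      -∑ i, ∑ j ∈ univ with G.Adj i j, (f j - f i) * g i j := by
  have h : ∑ i, ∑ j ∈ univ with G.Adj i j, f i * g i j =
      -∑ i, ∑ j ∈ univ with G.Adj i j, f j * g i j := by
    refine (G.sum_sum_adj_comm _).trans ?_
    rw [← sum_neg_distrib]
    exact sum_congr rfl fun i _ => by
      rw [← sum_neg_distrib]; exact sum_congr rfl fun j _ => by rw [hg, mul_neg]
  simp only [mul_sum (s := univ.filter _), sub_mul, sum_sub_distrib]
  linarith

lemma sum_sum_adj_eq_zero_of_antisymm {g : V → V → ℝ} (hg : ∀ i j, g j i = -g i j) :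
    ∑ i, ∑ j ∈ univ with G.Adj i j, g i j = 0 := by
  simpa using G.two_mul_sum_mul_sum_adj_of_antisymm (fun _ => 1) hg

lemma sum_sum_adj_eq_two_mul_sum_sum_adj_lt [LinearOrder V] {f : V → V → ℝ}
    (hf : ∀ i j, f j i = f i j) :
    ∑ i, ∑ j ∈ univ with G.Adj i j, f i j =
      2 * ∑ i, ∑ j ∈ univ with G.Adj i j ∧ i < j, f i j := by
  have hsplit : ∀ i, ∑ j ∈ univ with G.Adj i j, f i j =
      ∑ j ∈ univ with G.Adj i j ∧ i < j, f i j + ∑ j ∈ univ with G.Adj i j ∧ j < i, f i j := by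
    intro i
    rw [← sum_filter_add_sum_filter_not _ (fun j => i < j), filter_filter, filter_filter]
    congr 1
    refine sum_congr (filter_congr fun j _ => ?_) fun _ _ => rfl
    exact ⟨fun h => ⟨h.1, lt_of_le_of_ne (not_lt.1 h.2) (G.ne_of_adj h.1).symm⟩,
      fun h => ⟨h.1, not_lt.2 h.2.le⟩⟩
  have hswap : ∑ i, ∑ j ∈ univ with G.Adj i j ∧ j < i, f i j =
      ∑ j, ∑ i ∈ univ with G.Adj j i ∧ j < i, f i j :=
    sum_comm' fun i j => by simp [G.adj_comm]
  rw [sum_congr rfl fun i _ => hsplit i, sum_add_distrib, hswap, two_mul]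
  simp only [hf]

/-- Subadditivity of `x ↦ x ^ p` has to be applied over edges rather than ordered pairs, or a
factor `2 ^ (1 - p)` is lost; an arbitrary linear order picks one orientation of each edge. -/
lemma two_mul_rpow_half_sum_sum_adj_le {x : V → V → ℝ} (hx : ∀ i j, 0 ≤ x i j)
    (hsymm : ∀ i j, x j i = x i j) {p : ℝ} (hp0 : 0 < p) (hp1 : p ≤ 1) :
    2 * (1 / 2 * ∑ i, ∑ j ∈ univ with G.Adj i j, x i j) ^ p ≤
      ∑ i, ∑ j ∈ univ with G.Adj i j, x i j ^ p := by
  let : LinearOrder V := IsWellOrder.linearOrder WellOrderingRel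
  rw [G.sum_sum_adj_eq_two_mul_sum_sum_adj_lt hsymm,
    G.sum_sum_adj_eq_two_mul_sum_sum_adj_lt fun i j => by rw [hsymm], one_div,
    inv_mul_cancel_left₀ two_ne_zero]
  gcongr
  refine (Real.rpow_sum_le_sum_rpow _ (fun i _ => sum_nonneg fun j _ => hx i j) hp0 hp1).trans ?_
  exact sum_le_sum fun i _ => Real.rpow_sum_le_sum_rpow _ (fun j _ => hx i j) hp0 hp1

end Sums

section Spectral

variable {V : Type*} [Fintype V] [DecidableEq V] {G : SimpleGraph V} [DecidableRel G.Adj]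
  {lam : ℝ}

lemma Connected.two_mul_sum_sq_le (hG : G.Connected)
    (hspec : ∀ μ ∈ spectrum ℝ (G.lapMatrix ℝ), μ = 0 ∨ lam ≤ μ) {v : V → ℝ}
    (hv : ∑ i, v i = 0) :
    2 * lam * ∑ i, v i ^ 2 ≤ ∑ i, ∑ j ∈ univ with G.Adj i j, (v j - v i) ^ 2 := by
  have hker : ∀ w, G.lapMatrix ℝ *ᵥ w = 0 → w ⬝ᵥ v = 0 := by
    intro w hw
    obtain ⟨i₀⟩ := hG.nonempty
    have hconst : ∀ i, w i = w i₀ := fun i =>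
      G.lapMatrix_mulVec_eq_zero_iff_forall_reachable.1 hw i i₀ (hG.preconnected i i₀)
    simp only [dotProduct, hconst, ← mul_sum, hv, mul_zero]
  have h := (G.posSemidef_lapMatrix ℝ).isHermitian.mul_dotProduct_self_le hspec hker
  rw [← toLinearMap₂'_apply', G.lapMatrix_toLinearMap₂' (R := ℝ)] at h
  simp only [dotProduct, ← sq, sum_filter] at h ⊢
  calc 2 * lam * ∑ i, v i ^ 2 ≤ ∑ i, ∑ j, if G.Adj i j then (v i - v j) ^ 2 else 0 := by linarith
    _ = _ := sum_congr rfl fun i _ => sum_congr rfl fun j _ => by rw [← neg_sub, neg_sq]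

variable {m l : Type*} [Fintype m] [Fintype l]

lemma Connected.two_mul_sum_frobNorm_sq_le (hG : G.Connected)
    (hspec : ∀ μ ∈ spectrum ℝ (G.lapMatrix ℝ), μ = 0 ∨ lam ≤ μ) {Y : V → Matrix m l ℝ}
    (hY : ∑ i, Y i = 0) :
    2 * lam * ∑ i, frobNorm (Y i) ^ 2 ≤
      ∑ i, ∑ j ∈ univ with G.Adj i j, frobNorm (Y j - Y i) ^ 2 := by
  have hlhs : ∑ i, frobNorm (Y i) ^ 2 = ∑ a, ∑ b, ∑ i, Y i a b ^ 2 := by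
    simp only [frobNorm_sq]; exact sum_comm_cycle.symm
  have hrhs : ∑ i, ∑ j ∈ univ with G.Adj i j, frobNorm (Y j - Y i) ^ 2 =
      ∑ a, ∑ b, ∑ i, ∑ j ∈ univ with G.Adj i j, (Y j a b - Y i a b) ^ 2 := by
    simp only [frobNorm_sq, Matrix.sub_apply]; exact sum_sum_sum_sum_comm.symm
  rw [hlhs, hrhs, mul_sum]
  refine sum_le_sum fun a _ => ?_
  rw [mul_sum]
  refine sum_le_sum fun b _ => hG.two_mul_sum_sq_le hspec ?_
  simpa [Matrix.sum_apply] using congr_fun₂ hY a b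

lemma Connected.neg_half_sum_sum_adj_rpow_le (hG : G.Connected) (hlam : 0 ≤ lam)
    (hspec : ∀ μ ∈ spectrum ℝ (G.lapMatrix ℝ), μ = 0 ∨ lam ≤ μ) {α : ℝ} (hα0 : 0 ≤ α)
    (hα2 : α < 2) {X : V → Matrix m l ℝ} {c : Matrix m l ℝ} (hc : ∑ i, (X i - c) = 0) :
    -(1 / 2) * ∑ i, ∑ j ∈ univ with G.Adj i j, frobNorm (X j - X i) ^ (2 - α) ≤
      -(2 * lam) ^ ((2 - α) / 2) * (1 / 2 * ∑ i, frobNorm (X i - c) ^ 2) ^ ((2 - α) / 2) := by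
  have hpow : ∀ i j,
      frobNorm (X j - X i) ^ (2 - α) = (frobNorm (X j - X i) ^ 2) ^ ((2 - α) / 2) := fun i j => by
    rw [← Real.rpow_natCast, ← Real.rpow_mul (frobNorm_nonneg _)]; norm_num; ring_nf
  have hsub := G.two_mul_rpow_half_sum_sum_adj_le (x := fun i j => frobNorm (X j - X i) ^ 2)
    (fun i j => by positivity) (fun i j => by rw [frobNorm_sub_comm]) (p := (2 - α) / 2)
    (by linarith) (by linarith)
  have hspec' := hG.two_mul_sum_frobNorm_sq_le hspec hc
  simp only [sub_sub_sub_cancel_right] at hspec'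
  have hV : 0 ≤ 1 / 2 * ∑ i, frobNorm (X i - c) ^ 2 := by positivity
  calc -(1 / 2) * ∑ i, ∑ j ∈ univ with G.Adj i j, frobNorm (X j - X i) ^ (2 - α)
      = -(1 / 2) * ∑ i, ∑ j ∈ univ with G.Adj i j,
          (frobNorm (X j - X i) ^ 2) ^ ((2 - α) / 2) := by simp only [hpow]
    _ ≤ -(1 / 2 * ∑ i, ∑ j ∈ univ with G.Adj i j, frobNorm (X j - X i) ^ 2) ^ ((2 - α) / 2) := by
        linarith
    _ ≤ -(2 * lam * (1 / 2 * ∑ i, frobNorm (X i - c) ^ 2)) ^ ((2 - α) / 2) := by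
        exact neg_le_neg (Real.rpow_le_rpow (by positivity) (by linarith) (by linarith))
    _ = _ := by rw [Real.mul_rpow (by positivity) hV, neg_mul]

end Spectral

end SimpleGraph

lemma rpow_add_mul_le_of_hasDerivAt_le {V V' : ℝ → ℝ} {κ q a b : ℝ} (hab : a ≤ b)
    (hpos : ∀ s ∈ Set.Icc a b, 0 < V s) (hd : ∀ s ∈ Set.Icc a b, HasDerivAt V (V' s) s)
    (hineq : ∀ s ∈ Set.Icc a b, V' s ≤ -κ * V s ^ (1 - q)) (hq : 0 < q) :
    V b ^ q + κ * q * b ≤ V a ^ q + κ * q * a := by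
  have hW : ∀ s ∈ Set.Icc a b, HasDerivAt (fun y => V y ^ q + κ * q * y)
      (V' s * q * V s ^ (q - 1) + κ * q) s := fun s hs =>
    ((hd s hs).rpow_const (Or.inl (hpos s hs).ne')).add ((hasDerivAt_id s).const_mul (κ * q))
      |>.congr_deriv (by simp)
  have hW' : ∀ s ∈ Set.Icc a b, V' s * q * V s ^ (q - 1) + κ * q ≤ 0 := fun s hs => by
    have hcancel : V s ^ (1 - q) * V s ^ (q - 1) = 1 := by
      rw [← Real.rpow_add (hpos s hs), sub_add_sub_cancel', sub_self, Real.rpow_zero]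
    have := mul_le_mul_of_nonneg_right (hineq s hs)
      (mul_nonneg hq.le (Real.rpow_nonneg (hpos s hs).le (q - 1)))
    linear_combination this - κ * q * hcancel
  refine antitoneOn_of_hasDerivWithinAt_nonpos (convex_Icc a b)
    (fun s hs => (hW s hs).continuousAt.continuousWithinAt)
    (fun s hs => (hW s (interior_subset hs)).hasDerivWithinAt)
    (fun s hs => hW' s (interior_subset hs)) (Set.left_mem_Icc.2 hab) (Set.right_mem_Icc.2 hab)
    hab

lemma eq_zero_of_hasDerivAt_le_neg_mul_rpow {V V' : ℝ → ℝ} {κ q : ℝ} (hκ : 0 < κ) (hq : 0 < q)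
    (hV : ∀ s, 0 ≤ V s) (hd : ∀ s, HasDerivAt V (V' s) s)
    (hineq : ∀ s, V' s ≤ -κ * V s ^ (1 - q)) {t : ℝ} (ht : V 0 ^ q / (κ * q) ≤ t) :
    V t = 0 := by
  by_contra hne
  have hVt : 0 < V t := (hV t).lt_of_ne' hne
  have ht0 : 0 ≤ t := le_trans (by have := hV 0; positivity) ht
  have hanti : Antitone V := antitone_of_hasDerivAt_nonpos hd fun s => by
    have := Real.rpow_nonneg (hV s) (1 - q)
    rw [Pi.zero_apply]; nlinarith [hineq s]
  have hdecay := rpow_add_mul_le_of_hasDerivAt_le ht0 (fun s hs => hVt.trans_le (hanti hs.2))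
    (fun s _ => hd s) (fun s _ => hineq s) hq
  rw [div_le_iff₀ (by positivity)] at ht
  have := Real.rpow_pos_of_pos hVt q
  linarith

lemma hasDerivAt_half_sum_frobNorm_sq {ι m l : Type*} [Fintype ι] [Fintype m] [Fintype l]
    {S : ℝ → ι → Matrix m l ℝ} {F : ι → Matrix m l ℝ} {t : ℝ}
    (hS : ∀ i a b, HasDerivAt (fun s => S s i a b) (F i a b) t) (c : Matrix m l ℝ) :
    HasDerivAt (fun s => 1 / 2 * ∑ i, frobNorm (S s i - c) ^ 2)
      (∑ i, ∑ a, ∑ b, (S t i a b - c a b) * F i a b) t := by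
  simp only [frobNorm_sq, Matrix.sub_apply]
  refine ((HasDerivAt.fun_sum fun i _ => HasDerivAt.fun_sum fun a _ => HasDerivAt.fun_sum
    fun b _ => ((hS i a b).sub_const (c a b)).fun_pow 2).const_mul (1 / 2)).congr_deriv ?_
  simp only [mul_sum]
  refine sum_congr rfl fun i _ => sum_congr rfl fun a _ => sum_congr rfl fun b _ => ?_
  push_cast; ring

section Consensus

variable {ι m l : Type*} [Fintype ι] [Fintype m] [Fintype l] (G : SimpleGraph ι)
  [DecidableRel G.Adj]

/-- The convention that summands with `X j = X i` are `0` needs no case split here: such a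
summand is a multiple of `0`. -/
noncomputable def consensusField (α : ℝ) (X : ι → Matrix m l ℝ) (i : ι) : Matrix m l ℝ :=
  ∑ j ∈ univ with G.Adj i j, (frobNorm (X j - X i) ^ α)⁻¹ • (X j - X i)

lemma consensusField_eq_sum_ite (α : ℝ) (X : ι → Matrix m l ℝ) (i : ι)
    [∀ j, Decidable (X j = X i)] :
    consensusField G α X i = ∑ j ∈ univ with G.Adj i j,
      if X j = X i then 0 else (frobNorm (X j - X i) ^ α)⁻¹ • (X j - X i) :=
  sum_congr rfl fun j _ => by split_ifs with h <;> simp [h]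

lemma consensusField_apply (α : ℝ) (X : ι → Matrix m l ℝ) (i : ι) (a : m) (b : l) :
    consensusField G α X i a b =
      ∑ j ∈ univ with G.Adj i j, (frobNorm (X j - X i) ^ α)⁻¹ * (X j a b - X i a b) := by
  simp [consensusField, Matrix.sum_apply]

lemma sum_consensusField (α : ℝ) (X : ι → Matrix m l ℝ) : ∑ i, consensusField G α X i = 0 := by
  ext a b
  rw [Matrix.sum_apply, Matrix.zero_apply]
  simp only [consensusField_apply]
  refine G.sum_sum_adj_eq_zero_of_antisymm fun i j => ?_
  rw [frobNorm_sub_comm, ← neg_sub (X j a b), mul_neg]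

lemma sum_mul_consensusField {α : ℝ} (hα : α ≠ 2) (X : ι → Matrix m l ℝ) (c : Matrix m l ℝ) :
    ∑ i, ∑ a, ∑ b, (X i a b - c a b) * consensusField G α X i a b =
      -(1 / 2) * ∑ i, ∑ j ∈ univ with G.Adj i j, frobNorm (X j - X i) ^ (2 - α) := by
  have hentry : ∀ a b, 2 * ∑ i, (X i a b - c a b) * consensusField G α X i a b =
      -∑ i, ∑ j ∈ univ with G.Adj i j,
        (frobNorm (X j - X i) ^ α)⁻¹ * (X j a b - X i a b) ^ 2 := fun a b => by
    simp only [consensusField_apply]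
    rw [G.two_mul_sum_mul_sum_adj_of_antisymm _ fun i j => by
      rw [frobNorm_sub_comm, ← neg_sub (X j a b), mul_neg]]
    simp only [sub_sub_sub_cancel_right]
    congr 1
    exact sum_congr rfl fun i _ => sum_congr rfl fun j _ => by ring
  calc ∑ i, ∑ a, ∑ b, (X i a b - c a b) * consensusField G α X i a b
      = (1 / 2) * ∑ a, ∑ b, 2 * ∑ i, (X i a b - c a b) * consensusField G α X i a b := by
        rw [← sum_comm_cycle]; simp only [← mul_sum]; ring
    _ = -(1 / 2) * ∑ i, ∑ j ∈ univ with G.Adj i j,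
          (frobNorm (X j - X i) ^ α)⁻¹ * ∑ a, ∑ b, (X j a b - X i a b) ^ 2 := by
        simp only [hentry, sum_neg_distrib, sum_sum_sum_sum_comm, ← mul_sum]; ring
    _ = _ := by
        simp only [← Matrix.sub_apply, ← frobNorm_sq, Real.inv_rpow_mul_sq (frobNorm_nonneg _) hα]

lemma sum_eq_sum_zero_of_hasDerivAt_consensusField {α : ℝ} {S : ℝ → ι → Matrix m l ℝ}
    (hS : ∀ i t a b, HasDerivAt (fun s => S s i a b) (consensusField G α (S t) i a b) t)
    (t : ℝ) : ∑ i, S t i = ∑ i, S 0 i := by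
  ext a b
  simp only [Matrix.sum_apply]
  have hconst : ∀ s, HasDerivAt (fun s => ∑ i, S s i a b) 0 s := fun s => by
    simpa [← Matrix.sum_apply, sum_consensusField] using
      HasDerivAt.fun_sum (u := univ) fun i _ => hS i s a b
  exact is_const_of_deriv_eq_zero (fun s => (hconst s).differentiableAt)
    (fun s => (hconst s).deriv) t 0

end Consensus

theorem finite_time_consensus_convergence_general
    (n : ℕ) (G : SimpleGraph (Fin n)) (hconn : G.Connected)
    (lam2 : ℝ) (hlam2 : 0 < lam2)
    (hspec : ∀ μ : ℝ, μ ∈ spectrum ℝ (G.lapMatrix ℝ) → μ = 0 ∨ lam2 ≤ μ)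
    (α : ℝ) (hα0 : 0 < α) (hα1 : α < 1)
    (S : ℝ → Fin n → Matrix (Fin 4) (Fin 4) ℝ)
    (hderiv : ∀ i t (a b : Fin 4),
      HasDerivAt (fun s => S s i a b)
        ((∑ j ∈ Finset.univ.filter (fun j => G.Adj i j),
            if S t j = S t i then (0 : Matrix (Fin 4) (Fin 4) ℝ)
            else (frobNorm (S t j - S t i) ^ α)⁻¹ • (S t j - S t i)) a b) t) :
    letI Sc : Matrix (Fin 4) (Fin 4) ℝ := ((n : ℝ)⁻¹) • ∑ i, S 0 i
    letI V : ℝ → ℝ := fun t => (1 / 2) * ∑ i, frobNorm (S t i - Sc) ^ 2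
    letI κ : ℝ := (2 * lam2) ^ ((2 - α) / 2)
    (∃ V' : ℝ → ℝ, (∀ t, HasDerivAt V (V' t) t) ∧
        ∀ t, 0 ≤ t → V' t ≤ -κ * V t ^ ((2 - α) / 2)) ∧
      ∀ t, 2 * V 0 ^ (α / 2) / (κ * α) ≤ t → ∀ i, S t i = Sc := by
  set Sc : Matrix (Fin 4) (Fin 4) ℝ := ((n : ℝ)⁻¹) • ∑ i, S 0 i
  set V : ℝ → ℝ := fun t => (1 / 2) * ∑ i, frobNorm (S t i - Sc) ^ 2
  set κ : ℝ := (2 * lam2) ^ ((2 - α) / 2)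
  have hα2 : α < 2 := by linarith
  have hflow : ∀ i t a b, HasDerivAt (fun s => S s i a b) (consensusField G α (S t) i a b) t :=
    fun i t a b => by rw [consensusField_eq_sum_ite]; exact hderiv i t a b
  have hV : ∀ t, HasDerivAt V
      (-(1 / 2) * ∑ i, ∑ j ∈ univ with G.Adj i j, frobNorm (S t j - S t i) ^ (2 - α)) t :=
    fun t => by
      rw [← sum_mul_consensusField G hα2.ne (S t) Sc]
      exact hasDerivAt_half_sum_frobNorm_sq (hflow · t) Sc
  have hmean : ∀ t, ∑ i, (S t i - Sc) = 0 := fun t => by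
    rw [sum_sub_distrib, sum_eq_sum_zero_of_hasDerivAt_consensusField G hflow t,
      ← sum_sub_distrib]
    simpa only [Fintype.card_fin] using sum_sub_inv_card_smul_sum (S 0)
  have hdecay : ∀ t, -(1 / 2) * ∑ i, ∑ j ∈ univ with G.Adj i j,
      frobNorm (S t j - S t i) ^ (2 - α) ≤ -κ * V t ^ ((2 - α) / 2) := fun t =>
    hconn.neg_half_sum_sum_adj_rpow_le hlam2.le hspec hα0.le hα2 (hmean t)
  refine ⟨⟨_, hV, fun t _ => hdecay t⟩, fun t ht i => ?_⟩
  have hκ : 0 < κ := Real.rpow_pos_of_pos (by positivity) _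
  have hVt : V t = 0 := eq_zero_of_hasDerivAt_le_neg_mul_rpow hκ (half_pos hα0)
    (fun s => by positivity) hV (fun s => by convert hdecay s using 3; ring)
    (by convert ht using 1; field_simp)
  have hzero := (sum_eq_zero_iff_of_nonneg fun j _ => sq_nonneg (frobNorm (S t j - Sc))).1
    (by simpa [V] using hVt) i (mem_univ i)
  rwa [pow_eq_zero_iff two_ne_zero, frobNorm_eq_zero, sub_eq_zero] at hzero

/-- Finite-time consensus: along
`dSᵢ/dt = Σ_{j∈N_i}(S_j - S_i)/‖S_j - S_i‖_F^α` on a connected graph with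
algebraic connectivity `λ₂`, the Lyapunov function `V = (1/2)Σᵢ‖Sᵢ - S_c‖_F²`
satisfies `dV/dt ≤ -κ V^{(2-α)/2}` with `κ = (2λ₂)^{(2-α)/2}`, and all `Sᵢ`
reach the initial average in finite time `T_c ≤ 2 V(0)^{α/2}/(κα)`. -/
theorem finite_time_consensus_convergence
    (n : ℕ) (hn : 0 < n) (G : SimpleGraph (Fin n)) (hconn : G.Connected)
    (lam2 : ℝ) (hlam2 : 0 < lam2)
    (hspec : ∀ μ : ℝ, μ ∈ spectrum ℝ (G.lapMatrix ℝ) → μ = 0 ∨ lam2 ≤ μ)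
    (α : ℝ) (hα0 : 0 < α) (hα1 : α < 1)
    (S : ℝ → Fin n → Matrix (Fin 4) (Fin 4) ℝ)
    (hderiv : ∀ i t (a b : Fin 4),
      HasDerivAt (fun s => S s i a b)
        ((∑ j ∈ Finset.univ.filter (fun j => G.Adj i j),
            if S t j = S t i then (0 : Matrix (Fin 4) (Fin 4) ℝ)
            else (frobNorm (S t j - S t i) ^ α)⁻¹ • (S t j - S t i)) a b) t) :
    letI Sc : Matrix (Fin 4) (Fin 4) ℝ := ((n : ℝ)⁻¹) • ∑ i, S 0 i
    letI V : ℝ → ℝ := fun t => (1 / 2) * ∑ i, frobNorm (S t i - Sc) ^ 2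
    letI κ : ℝ := (2 * lam2) ^ ((2 - α) / 2)
    (∃ V' : ℝ → ℝ, (∀ t, HasDerivAt V (V' t) t) ∧
        ∀ t, 0 ≤ t → V' t ≤ -κ * V t ^ ((2 - α) / 2)) ∧
      ∀ t, 2 * V 0 ^ (α / 2) / (κ * α) ≤ t → ∀ i, S t i = Sc :=
  finite_time_consensus_convergence_general n G hconn lam2 hlam2 hspec α hα0 hα1 S hderiv
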